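/- Let {Mₙ} be i.i.d. positive random variables, Πₙ = M₁⋯Mₙ, and suppose E[f(|Z_∞|)] < ∞ for a nondegenerate perpetuity Z_∞ with f nondecreasing and subadditive. Suppose there exist ρ ∈ (0,1) with κ := P(|M| > ρ) > 0 and the tail bounds P(sup_{k≥0}|Π_{2k}| > x) ≤ 8 P(|Z_∞| > cx) for all x > 0 and some c ∈ (0,1). Then P(sup_{k≥0}|Π_k| > 2x) ≤ (1 + κ⁻¹) P(sup_{k≥0}|Π_{2k}| > ρx) for all x > 0, and consequently E[f(sup_{n≥0}|Πₙ|)] < ∞. -/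

import Mathlib

/-!
Split the event `sup_k |Π_k| > 2x` according to the parity of the index. Even indices land
directly in `sup_k |Π_{2k}| > ρx`. For odd indices, decompose by the first odd index `2k+1`
with `|Π_{2k+1}| > x`: this event is determined by `M_0, …, M_{2k}`, hence independent of
`|M_{2k+1}| > ρ`, an event of probability `κ` on which `|Π_{2k+2}| > ρx`. Summing over `k`,
`κ · P(some odd index) ≤ P(sup_k |Π_{2k}| > ρx)`.

Together with the assumed tail bound this gives `P(sup_n |Π_n| > v) ≤ C · P(K|Z| > v)` for all
`v > 0` and suitable constants `C`, `K`. The layer-cake formula turns this domination of tails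
into `E f(sup_n |Π_n|) ≤ C · E f(2K|Z|) ≤ C ⌈2K⌉ · E f(|Z|)`, using that `f` is nondecreasing
and subadditive.
-/

open MeasureTheory ProbabilityTheory Set Real Filter
open scoped ProbabilityTheory ENNReal Topology

lemma MonotoneOn.superlevel_eq_Ioi_or_Ici {g : ℝ → ℝ} (hg : MonotoneOn g (Ici 0)) (t : ℝ) :
    (∀ y, 0 ≤ y → g y ≤ t) ∨
      ∃ a, 0 ≤ a ∧
        ((∀ y, 0 ≤ y → (t < g y ↔ a < y)) ∨ ∀ y, 0 ≤ y → (t < g y ↔ a ≤ y)) := by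
  by_cases hU : ∃ y, 0 ≤ y ∧ t < g y
  swap
  · push Not at hU
    exact .inl hU
  set U := {y | 0 ≤ y ∧ t < g y}
  have hbdd : BddBelow U := ⟨0, fun y hy => hy.1⟩
  have ha0 : 0 ≤ sInf U := le_csInf hU fun y hy => hy.1
  have hlt {y : ℝ} (hy : sInf U < y) : t < g y := by
    obtain ⟨u, hu, huy⟩ := exists_lt_of_csInf_lt hU hy
    exact hu.2.trans_le (hg hu.1 (hu.1.trans huy.le) huy.le)
  refine .inr ⟨sInf U, ha0, ?_⟩
  by_cases ha : sInf U ∈ U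
  · refine .inr fun y hy => ⟨fun h => csInf_le hbdd ⟨hy, h⟩, fun h => ?_⟩
    exact ha.2.trans_le (hg ha.1 hy h)
  · refine .inl fun y hy => ⟨fun h => (csInf_le hbdd ⟨hy, h⟩).lt_of_ne ?_, hlt⟩
    rintro rfl
    exact ha ⟨hy, h⟩

lemma le_natCeil_mul_of_subadditive {f : ℝ → ℝ} (hmono : MonotoneOn f (Ici 0))
    (hf0 : f 0 = 0)
    (hadd : ∀ x ∈ Ici (0 : ℝ), ∀ y ∈ Ici (0 : ℝ), f (x + y) ≤ f x + f y)
    {L y : ℝ} (hL : 0 ≤ L) (hy : 0 ≤ y) : f (L * y) ≤ ⌈L⌉₊ * f y := by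
  have hnat (n : ℕ) : f (n * y) ≤ n * f y := by
    induction n with
    | zero => simp [hf0]
    | succ n ih =>
      calc f ((n + 1 : ℕ) * y) = f (n * y + y) := by push_cast; ring_nf
        _ ≤ f (n * y) + f y := hadd _ (mem_Ici.2 (by positivity)) _ hy
        _ ≤ (n + 1 : ℕ) * f y := by push_cast; linarith
  exact (hmono (mem_Ici.2 (by positivity)) (mem_Ici.2 (by positivity))
    (mul_le_mul_of_nonneg_right (Nat.le_ceil L) hy)).trans (hnat _)

section Tails

variable {Ω : Type*} [MeasurableSpace Ω] {μ : Measure Ω}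

lemma measure_zero_lt_le_of_forall_pos {X Y : Ω → ℝ} {C : ℝ≥0∞} (hC : C ≠ ∞)
    (h : ∀ a > 0, μ {ω | a < X ω} ≤ C * μ {ω | a < Y ω}) :
    μ {ω | 0 < X ω} ≤ C * μ {ω | 0 < Y ω} := by
  have hlim (V : Ω → ℝ) :
      Tendsto (fun n : ℕ => μ {ω | 1 / ((n : ℝ) + 1) < V ω}) atTop
        (𝓝 (μ {ω | 0 < V ω})) := by
    have hmono : Monotone fun n : ℕ => {ω | 1 / ((n : ℝ) + 1) < V ω} :=
      fun _ _ hmn => ofPred_subset_ofPred.2 fun _ => (Nat.one_div_le_one_div hmn).trans_lt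
    have hU : {ω | 0 < V ω} = ⋃ n : ℕ, {ω | 1 / ((n : ℝ) + 1) < V ω} := by
      ext ω
      simp only [mem_iUnion, mem_ofPred_eq]
      exact ⟨exists_nat_one_div_lt, fun ⟨_, hn⟩ => Nat.one_div_pos_of_nat.trans hn⟩
    rw [hU]
    exact tendsto_measure_iUnion_atTop hmono
  exact le_of_tendsto_of_tendsto' (hlim X) (ENNReal.Tendsto.const_mul (hlim Y) (.inr hC))
    fun n => h _ Nat.one_div_pos_of_nat

lemma measure_lt_comp_le_of_tail_le {X Y : Ω → ℝ} (hX : ∀ ω, 0 ≤ X ω) (hY : ∀ ω, 0 ≤ Y ω)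
    {g : ℝ → ℝ} (hg : MonotoneOn g (Ici 0)) (hg0 : g 0 = 0) {C : ℝ≥0∞} (hC : C ≠ ∞)
    (h : ∀ a > 0, μ {ω | a < X ω} ≤ C * μ {ω | a < Y ω}) {t : ℝ} (ht : 0 < t) :
    μ {ω | t < g (X ω)} ≤ C * μ {ω | t < g (2 * Y ω)} := by
  -- A superlevel set `[a, ∞)` of `g` is only controlled through the open tail at `a / 2`.
  have h2Y (ω : Ω) : 0 ≤ 2 * Y ω := mul_nonneg zero_le_two (hY ω)
  rcases hg.superlevel_eq_Ioi_or_Ici t with hbot | ⟨a, ha0, hopen | hclosed⟩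
  · simp [fun ω => (hbot _ (hX ω)).not_gt]
  · have hXa : {ω | t < g (X ω)} = {ω | a < X ω} := by ext ω; exact hopen _ (hX ω)
    calc μ {ω | t < g (X ω)} = μ {ω | a < X ω} := by rw [hXa]
      _ ≤ C * μ {ω | a < Y ω} := by
          rcases ha0.eq_or_lt with rfl | ha
          · exact measure_zero_lt_le_of_forall_pos hC h
          · exact h a ha
      _ ≤ C * μ {ω | t < g (2 * Y ω)} := by
          refine mul_le_mul_right (measure_mono (ofPred_subset_ofPred.2 fun ω hω => ?_)) C
          exact (hopen _ (h2Y ω)).2 (by linarith [hY ω])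
  · have ha : 0 < a := ha0.lt_of_ne fun h0 => by
      have := (hclosed 0 le_rfl).2 h0.ge
      linarith [hg0 ▸ this]
    calc μ {ω | t < g (X ω)} ≤ μ {ω | a / 2 < X ω} :=
          measure_mono (ofPred_subset_ofPred.2 fun ω hω => by
            linarith [(hclosed _ (hX ω)).1 hω])
      _ ≤ C * μ {ω | a / 2 < Y ω} := h _ (half_pos ha)
      _ ≤ C * μ {ω | t < g (2 * Y ω)} := by
          refine mul_le_mul_right (measure_mono (ofPred_subset_ofPred.2 fun ω hω => ?_)) C
          exact (hclosed _ (h2Y ω)).2 (by linarith)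

lemma MonotoneOn.measurable_comp_of_nonneg {g : ℝ → ℝ} (hg : MonotoneOn g (Ici 0))
    {X : Ω → ℝ} (hXm : Measurable X) (hX : ∀ ω, 0 ≤ X ω) : Measurable fun ω => g (X ω) := by
  have hmono : Monotone fun y => g (max y 0) := fun a b hab =>
    hg (le_max_right a 0) (le_max_right b 0) (max_le_max hab le_rfl)
  convert hmono.measurable.comp hXm using 2 with ω
  simp [max_eq_left (hX ω)]

theorem integrable_comp_of_tail_le {X Y W : Ω → ℝ} (hXm : Measurable X) (hX : ∀ ω, 0 ≤ X ω)
    (hY : ∀ ω, 0 ≤ Y ω) {g : ℝ → ℝ} (hg : MonotoneOn g (Ici 0)) (hg0 : g 0 = 0)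
    {C : ℝ≥0∞} (hC : C ≠ ∞) (h : ∀ a > 0, μ {ω | a < X ω} ≤ C * μ {ω | a < Y ω})
    (hW : Integrable W μ) (hgW : ∀ ω, g (2 * Y ω) ≤ W ω) :
    Integrable (fun ω => g (X ω)) μ := by
  have hg_nonneg {y : ℝ} (hy : 0 ≤ y) : 0 ≤ g y := hg0 ▸ hg self_mem_Ici hy hy
  have hgX : 0 ≤ᵐ[μ] fun ω => g (X ω) := ae_of_all _ fun ω => hg_nonneg (hX ω)
  have hW0 : 0 ≤ᵐ[μ] W :=
    ae_of_all _ fun ω => (hg_nonneg (by linarith [hY ω])).trans (hgW ω)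
  refine ⟨(hg.measurable_comp_of_nonneg hXm hX).aestronglyMeasurable,
    (hasFiniteIntegral_iff_ofReal hgX).2 ?_⟩
  calc ∫⁻ ω, ENNReal.ofReal (g (X ω)) ∂μ = ∫⁻ t in Ioi 0, μ {ω | t < g (X ω)} :=
        lintegral_eq_lintegral_meas_lt μ hgX
          (hg.measurable_comp_of_nonneg hXm hX).aemeasurable
    _ ≤ ∫⁻ t in Ioi 0, C * μ {ω | t < W ω} := by
        refine setLIntegral_mono' measurableSet_Ioi fun t ht => ?_
        refine (measure_lt_comp_le_of_tail_le hX hY hg hg0 hC h ht).trans ?_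
        gcongr with ω
        exact hgW ω
    _ = C * ∫⁻ ω, ENNReal.ofReal (W ω) ∂μ := by
        rw [lintegral_const_mul' _ _ hC, lintegral_eq_lintegral_meas_lt μ hW0 hW.aemeasurable]
    _ < ∞ := ENNReal.mul_lt_top hC.lt_top ((hasFiniteIntegral_iff_ofReal hW0).1 hW.2)

end Tails

namespace ProbabilityTheory

variable {Ω : Type*} {M : ℕ → Ω → ℝ}

lemma measurable_prod_range_of_le {n j : ℕ} (hj : j ≤ n) :
    Measurable[⨆ i < n, MeasurableSpace.comap (M i) inferInstance]
      (fun ω => ∏ k ∈ Finset.range j, M k ω) := by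
  refine Finset.measurable_prod _ fun k hk => (comap_measurable (M k)).mono ?_ le_rfl
  exact le_iSup₂ (f := fun i (_ : i < n) => MeasurableSpace.comap (M i) inferInstance) k
    (by rw [Finset.mem_range] at hk; omega)

variable [MeasurableSpace Ω] {μ : Measure Ω}

lemma iIndepFun.measure_inter_preimage_eq_mul_of_past (hM : ∀ n, Measurable (M n))
    (hind : iIndepFun M μ) {n : ℕ} {A : Set Ω}
    (hA : MeasurableSet[⨆ i < n, MeasurableSpace.comap (M i) inferInstance] A)
    {B : Set ℝ} (hB : MeasurableSet B) :
    μ (A ∩ M n ⁻¹' B) = μ A * μ (M n ⁻¹' B) := by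
  have := indep_iSup_of_disjoint (fun i => (hM i).comap_le) hind.iIndep
    (S := Iio n) (T := {n}) (by simp)
  refine (Indep_iff _ _ μ).1 this A _ hA ?_
  rw [iSup_singleton]
  exact ⟨B, hB, rfl⟩

lemma measure_mul_measure_exists_lt_prod_le [IsFiniteMeasure μ]
    (hM : ∀ n, Measurable (M n)) (hind : iIndepFun M μ) (hident : ∀ n, IdentDistrib (M n) (M 0) μ μ)
    {τ : ℕ → ℕ} (hτ : Monotone τ) {x ρ : ℝ} (hx : 0 ≤ x) (hρ : 0 ≤ ρ) :
    μ {ω | ρ < |M 0 ω|} * μ {ω | ∃ k, x < |∏ i ∈ Finset.range (τ k), M i ω|}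
      ≤ μ {ω | ∃ k, ρ * x < |∏ i ∈ Finset.range (τ k + 1), M i ω|} := by
  set 𝓕 : ℕ → MeasurableSpace Ω :=
    fun n => ⨆ i < n, MeasurableSpace.comap (M i) inferInstance
  have h𝓕 (n : ℕ) : 𝓕 n ≤ ‹MeasurableSpace Ω› := iSup₂_le fun i _ => (hM i).comap_le
  set s : ℕ → Set Ω := fun k => {ω | x < |∏ i ∈ Finset.range (τ k), M i ω|}
  set B : Set ℝ := {y | ρ < |y|}
  have hB : MeasurableSet B := measurableSet_lt measurable_const measurable_abs
  have hs {j k : ℕ} (hjk : j ≤ k) : MeasurableSet[𝓕 (τ k)] (s j) :=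
    (measurable_abs.comp (measurable_prod_range_of_le (hτ hjk))) measurableSet_Ioi
  -- `disjointed s k` is the event that `k` is the first index with `|Π_{τ k}| > x`.
  have hA (k : ℕ) : MeasurableSet[𝓕 (τ k)] (disjointed s k) := by
    rw [disjointed_eq_inter_compl]
    exact (hs le_rfl).inter (.biInter (to_countable _) fun j hj => (hs (le_of_lt hj)).compl)
  have hAB (k : ℕ) :
      μ (disjointed s k ∩ M (τ k) ⁻¹' B) = μ (disjointed s k) * μ {ω | ρ < |M 0 ω|} := by
    rw [hind.measure_inter_preimage_eq_mul_of_past hM (hA k) hB,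
      (hident (τ k)).measure_mem_eq hB]
    rfl
  rw [ofPred_exists, ofPred_exists]
  calc μ {ω | ρ < |M 0 ω|} * μ (⋃ k, s k)
      = μ (⋃ k, disjointed s k ∩ M (τ k) ⁻¹' B) := by
        have hdisj := disjoint_disjointed s
        rw [← iUnion_disjointed, measure_iUnion hdisj fun k => h𝓕 _ _ (hA k),
          measure_iUnion (hdisj.mono fun _ _ h => h.mono inter_subset_left inter_subset_left)
            fun k => (h𝓕 _ _ (hA k)).inter (hM _ hB), ← ENNReal.tsum_mul_left]
        simp_rw [hAB, mul_comm]
    _ ≤ μ (⋃ k, {ω | ρ * x < |∏ i ∈ Finset.range (τ k + 1), M i ω|}) := by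
        refine measure_mono (iUnion_subset fun k ω hω => mem_iUnion_of_mem k ?_)
        have hx' : x < |∏ i ∈ Finset.range (τ k), M i ω| := disjointed_subset s k hω.1
        have hρ' : ρ < |M (τ k) ω| := hω.2
        rw [mem_ofPred_eq, Finset.prod_range_succ, abs_mul, mul_comm ρ]
        exact mul_lt_mul'' hx' hρ' hx hρ

lemma measure_exists_two_mul_lt_prod_le [IsFiniteMeasure μ] (hM : ∀ n, Measurable (M n))
    (hind : iIndepFun M μ) (hident : ∀ n, IdentDistrib (M n) (M 0) μ μ)
    {x ρ : ℝ} (hx : 0 < x) (hρ0 : 0 ≤ ρ) (hρ2 : ρ ≤ 2) (hκ : μ {ω | ρ < |M 0 ω|} ≠ 0) :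
    μ {ω | ∃ k, 2 * x < |∏ i ∈ Finset.range k, M i ω|}
      ≤ (1 + (μ {ω | ρ < |M 0 ω|})⁻¹) *
          μ {ω | ∃ k, ρ * x < |∏ i ∈ Finset.range (2 * k), M i ω|} := by
  set κ := μ {ω | ρ < |M 0 ω|}
  set E := {ω | ∃ k, ρ * x < |∏ i ∈ Finset.range (2 * k), M i ω|}
  set O := {ω | ∃ k, x < |∏ i ∈ Finset.range (2 * k + 1), M i ω|}
  have hsplit : {ω | ∃ k, 2 * x < |∏ i ∈ Finset.range k, M i ω|} ⊆ E ∪ O := by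
    rintro ω ⟨k, hk⟩
    obtain ⟨j, rfl | rfl⟩ := Nat.even_or_odd' k
    · exact Or.inl ⟨j, by nlinarith⟩
    · exact Or.inr ⟨j, by linarith⟩
  have hO : κ * μ O ≤ μ E := by
    refine (measure_mul_measure_exists_lt_prod_le hM hind hident
      (τ := fun k => 2 * k + 1) (fun _ _ h => by dsimp; omega) hx.le hρ0).trans
      (measure_mono ?_)
    exact fun ω ⟨k, hk⟩ => ⟨k + 1, by rwa [mul_add_one]⟩
  calc μ {ω | ∃ k, 2 * x < |∏ i ∈ Finset.range k, M i ω|}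
      ≤ μ E + μ O := (measure_mono hsplit).trans (measure_union_le E O)
    _ ≤ μ E + κ⁻¹ * μ E := by
        gcongr
        rwa [← ENNReal.div_eq_inv_mul, ENNReal.le_div_iff_mul_le (.inl hκ)
          (.inl (measure_ne_top _ _)), mul_comm]
    _ = (1 + κ⁻¹) * μ E := by ring

end ProbabilityTheory

theorem sup_Pi_moment_general
    {Ω : Type*} [MeasureSpace Ω] [IsProbabilityMeasure (ℙ : Measure Ω)]
    (M : ℕ → Ω → ℝ) (hMmeas : ∀ n, Measurable (M n))
    (hindep : iIndepFun M ℙ)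
    (hident : ∀ n, IdentDistrib (M n) (M 0) ℙ ℙ)
    (Pi : ℕ → Ω → ℝ) (hPi : ∀ n ω, Pi n ω = ∏ k ∈ Finset.range n, M k ω)
    (Z : Ω → ℝ)
    (f : ℝ → ℝ)
    (hf_mono : MonotoneOn f (Ici (0:ℝ)))
    (hf0 : f 0 = 0)
    (hf_add : ∀ x ∈ Ici (0:ℝ), ∀ y ∈ Ici (0:ℝ), f (x + y) ≤ f x + f y)
    (hZint : Integrable (fun ω => f |Z ω|) ℙ)
    (ρ : ℝ) (hρ0 : 0 < ρ) (hρ1 : ρ < 1)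
    (κ : ℝ) (hκ : κ = ((ℙ : Measure Ω) {ω | ρ < |M 0 ω|}).toReal) (hκpos : 0 < κ)
    (c : ℝ) (hc0 : 0 < c)
    (htail : ∀ x : ℝ, 0 < x →
      (ℙ : Measure Ω) {ω | ∃ k : ℕ, x < |Pi (2 * k) ω|}
        ≤ 8 * (ℙ : Measure Ω) {ω | c * x < |Z ω|}) :
    (∀ x : ℝ, 0 < x →
      (ℙ : Measure Ω) {ω | ∃ k : ℕ, 2 * x < |Pi k ω|}
        ≤ ENNReal.ofReal (1 + κ⁻¹) *
          (ℙ : Measure Ω) {ω | ∃ k : ℕ, ρ * x < |Pi (2 * k) ω|}) ∧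
    Integrable (fun ω => f (⨆ n : ℕ, |Pi n ω|)) ℙ := by
  obtain rfl : Pi = fun n ω => ∏ k ∈ Finset.range n, M k ω := funext₂ hPi
  have hκ0 : (ℙ : Measure Ω) {ω | ρ < |M 0 ω|} ≠ 0 := fun h => by simp [h] at hκ; linarith
  have hκ' : ENNReal.ofReal (1 + κ⁻¹) = 1 + ((ℙ : Measure Ω) {ω | ρ < |M 0 ω|})⁻¹ := by
    rw [ENNReal.ofReal_add zero_le_one (inv_nonneg.2 hκpos.le), ENNReal.ofReal_one,
      ENNReal.ofReal_inv_of_pos hκpos, hκ, ENNReal.ofReal_toReal (measure_ne_top _ _)]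
  have hmain (x : ℝ) (hx : 0 < x) := hκ' ▸
    measure_exists_two_mul_lt_prod_le hMmeas hindep hident hx hρ0.le (by linarith) hκ0
  refine ⟨hmain, ?_⟩
  have htailS (a : ℝ) (ha : 0 < a) :
      (ℙ : Measure Ω) {ω | a < ⨆ n : ℕ, |∏ k ∈ Finset.range n, M k ω|}
        ≤ ENNReal.ofReal (1 + κ⁻¹) * 8 * ℙ {ω | a < 2 / (c * ρ) * |Z ω|} := by
    have hZ : {ω | c * (ρ * (a / 2)) < |Z ω|} = {ω | a < 2 / (c * ρ) * |Z ω|} := by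
      ext ω
      rw [mem_ofPred_eq, mem_ofPred_eq, div_mul_eq_mul_div, lt_div_iff₀ (by positivity)]
      constructor <;> intro <;> linarith
    calc (ℙ : Measure Ω) {ω | a < ⨆ n : ℕ, |∏ k ∈ Finset.range n, M k ω|}
        ≤ ℙ {ω | ∃ k, 2 * (a / 2) < |∏ i ∈ Finset.range k, M i ω|} :=
          measure_mono (ofPred_subset_ofPred.2 fun ω hω =>
            (exists_lt_of_lt_ciSup hω).imp fun k hk => by linarith)
      _ ≤ ENNReal.ofReal (1 + κ⁻¹) *
            ℙ {ω | ∃ k, ρ * (a / 2) < |∏ i ∈ Finset.range (2 * k), M i ω|} :=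
          hmain _ (half_pos ha)
      _ ≤ ENNReal.ofReal (1 + κ⁻¹) * 8 * ℙ {ω | a < 2 / (c * ρ) * |Z ω|} := by
          rw [mul_assoc, ← hZ]
          exact mul_le_mul_right (htail _ (by positivity)) _
  refine integrable_comp_of_tail_le
    (Measurable.iSup fun n => (Finset.measurable_prod _ fun k _ => hMmeas k).abs)
    (fun ω => Real.iSup_nonneg fun n => abs_nonneg _) (fun ω => by positivity) hf_mono hf0
    (by finiteness) htailS (hZint.const_mul ⌈2 * (2 / (c * ρ))⌉₊) fun ω => ?_
  rw [← mul_assoc]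
  exact le_natCeil_mul_of_subadditive hf_mono hf0 hf_add (by positivity) (abs_nonneg _)

/-- Key step in Lemma 3.1: with i.i.d. positive `Mₙ`, `Πₙ = M₁⋯Mₙ`, a nondegenerate
perpetuity `Z_∞` with `E f(|Z_∞|) < ∞` (`f` nondecreasing subadditive), `ρ ∈ (0,1)`
with `κ = P(|M| > ρ) > 0`, and the tail bound
`P(sup_{k≥0}|Π_{2k}| > x) ≤ 8 P(|Z_∞| > c x)`, one has
`P(sup_{k≥0}|Π_k| > 2x) ≤ (1 + κ⁻¹) P(sup_{k≥0}|Π_{2k}| > ρ x)` for all `x > 0`,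
and consequently `E f(sup_{n≥0}|Πₙ|) < ∞`. -/
theorem sup_Pi_moment
    {Ω : Type*} [MeasureSpace Ω] [IsProbabilityMeasure (ℙ : Measure Ω)]
    (M : ℕ → Ω → ℝ) (hMmeas : ∀ n, Measurable (M n))
    (hindep : iIndepFun M ℙ)
    (hident : ∀ n, IdentDistrib (M n) (M 0) ℙ ℙ)
    (hMpos : ∀ᵐ ω ∂(ℙ : Measure Ω), 0 < M 0 ω)
    (Pi : ℕ → Ω → ℝ) (hPi : ∀ n ω, Pi n ω = ∏ k ∈ Finset.range n, M k ω)
    (Z : Ω → ℝ)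
    (hnondeg : ∀ cst : ℝ, (ℙ : Measure Ω) {ω | Z ω = cst} < 1)
    (f : ℝ → ℝ) (Cf : ℝ)
    (hf_mono : MonotoneOn f (Ici (0:ℝ)))
    (hf_nonneg : ∀ x ∈ Ici (0:ℝ), 0 ≤ f x)
    (hf0 : f 0 = 0)
    (hf_add : ∀ x ∈ Ici (0:ℝ), ∀ y ∈ Ici (0:ℝ), f (x + y) ≤ f x + f y)
    (hf_sub : ∀ x ∈ Ici (0:ℝ), ∀ y ∈ Ici (0:ℝ), f (x * y) ≤ Cf * (f x + f y))
    (hZint : Integrable (fun ω => f |Z ω|) ℙ)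
    (ρ : ℝ) (hρ0 : 0 < ρ) (hρ1 : ρ < 1)
    (κ : ℝ) (hκ : κ = ((ℙ : Measure Ω) {ω | ρ < |M 0 ω|}).toReal) (hκpos : 0 < κ)
    (c : ℝ) (hc0 : 0 < c) (hc1 : c < 1)
    (htail : ∀ x : ℝ, 0 < x →
      (ℙ : Measure Ω) {ω | ∃ k : ℕ, x < |Pi (2 * k) ω|}
        ≤ 8 * (ℙ : Measure Ω) {ω | c * x < |Z ω|}) :
    (∀ x : ℝ, 0 < x →
      (ℙ : Measure Ω) {ω | ∃ k : ℕ, 2 * x < |Pi k ω|}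
        ≤ ENNReal.ofReal (1 + κ⁻¹) *
          (ℙ : Measure Ω) {ω | ∃ k : ℕ, ρ * x < |Pi (2 * k) ω|}) ∧
    Integrable (fun ω => f (⨆ n : ℕ, |Pi n ω|)) ℙ :=
  sup_Pi_moment_general M hMmeas hindep hident Pi hPi Z f hf_mono hf0 hf_add hZint ρ hρ0 hρ1 κ hκ
    hκpos c hc0 htail
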